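/- If ε = 1 (Markeev's integrable case of the gyroscopic ball rolling over a plane), then along any solution of the gyroscopic Chaplygin ball system the function F₄(t) = ⟨G(t) + κ, γ(t)⟩ is constant in t. -/

import Mathlib

/-! For `ε = 1` the vectors `G + κ` and `γ` obey the same law `u' = u × ω`, i.e. both are
carried by one rotation. Since `⟨a × ω, b⟩ + ⟨a, b × ω⟩ = 0`, the derivative of `⟨G + κ, γ⟩`
vanishes identically. -/

open Matrix

theorem HasDerivAt.dotProduct {𝕜 ι : Type*} [NontriviallyNormedField 𝕜] [Fintype ι]
    {f g : 𝕜 → ι → 𝕜} {f' g' : ι → 𝕜} {t : 𝕜}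
    (hf : HasDerivAt f f' t) (hg : HasDerivAt g g' t) :
    HasDerivAt (fun s ↦ f s ⬝ᵥ g s) (f' ⬝ᵥ g t + f t ⬝ᵥ g') t := by
  unfold _root_.dotProduct
  rw [← Finset.sum_add_distrib]
  exact HasDerivAt.fun_sum fun i _ ↦ (hasDerivAt_pi.1 hf i).mul (hasDerivAt_pi.1 hg i)

theorem cross_dotProduct_add_dotProduct_cross {R : Type*} [CommRing R] (a b w : Fin 3 → R) :
    a ⨯₃ w ⬝ᵥ b + a ⬝ᵥ b ⨯₃ w = 0 := by
  rw [dotProduct_comm, triple_product_permutation, ← cross_anticomm, dotProduct_neg,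
    neg_add_cancel]

theorem dotProduct_eq_of_hasDerivAt_cross {u v ω : ℝ → Fin 3 → ℝ}
    (hu : ∀ t, HasDerivAt u (u t ⨯₃ ω t) t) (hv : ∀ t, HasDerivAt v (v t ⨯₃ ω t) t)
    (t₁ t₂ : ℝ) : u t₁ ⬝ᵥ v t₁ = u t₂ ⬝ᵥ v t₂ := by
  have hderiv (t : ℝ) : HasDerivAt (fun s ↦ u s ⬝ᵥ v s) 0 t := by
    simpa only [cross_dotProduct_add_dotProduct_cross] using (hu t).dotProduct (hv t)
  exact is_const_of_deriv_eq_zero (fun t ↦ (hderiv t).differentiableAt)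
    (fun t ↦ (hderiv t).deriv) t₁ t₂

theorem gyroscopic_chaplygin_ball_markeev_integral_general
    (ε : ℝ)
    (hε : ε = 1)
    (κ : Fin 3 → ℝ)
    (ω γ : ℝ → Fin 3 → ℝ)
    (G : ℝ → Fin 3 → ℝ)
    (heqG : ∀ t, HasDerivAt G ((G t + κ) ⨯₃ ω t) t)
    (heqγ : ∀ t, HasDerivAt γ (ε • (γ t ⨯₃ ω t)) t) :
    ∀ t₁ t₂ : ℝ, (G t₁ + κ) ⬝ᵥ γ t₁ = (G t₂ + κ) ⬝ᵥ γ t₂ := by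
  subst hε
  simp only [one_smul] at heqγ
  exact dotProduct_eq_of_hasDerivAt_cross (u := fun t ↦ G t + κ)
    (fun t ↦ (heqG t).add_const κ) heqγ

/-- If `ε = 1` (Markeev's integrable case of the gyroscopic ball rolling over a plane),
then along any solution of the gyroscopic Chaplygin ball system the function
`F₄ = ⟨G + κ, γ⟩` is constant. -/
theorem gyroscopic_chaplygin_ball_markeev_integral
    (I₁ I₂ I₃ D ε : ℝ) (hI₁ : 0 < I₁) (hI₂ : 0 < I₂) (hI₃ : 0 < I₃) (hD : 0 < D)
    (hε : ε = 1)
    (κ : Fin 3 → ℝ)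
    (ω γ : ℝ → Fin 3 → ℝ) (hω : Differentiable ℝ ω) (hγ : Differentiable ℝ γ)
    (G : ℝ → Fin 3 → ℝ)
    (hG : ∀ t, G t =
      (Matrix.diagonal ![I₁, I₂, I₃] + D • (1 : Matrix (Fin 3) (Fin 3) ℝ)) *ᵥ ω t
        - (D * (ω t ⬝ᵥ γ t)) • γ t)
    (heqG : ∀ t, HasDerivAt G ((G t + κ) ⨯₃ ω t) t)
    (heqγ : ∀ t, HasDerivAt γ (ε • (γ t ⨯₃ ω t)) t) :
    ∀ t₁ t₂ : ℝ, (G t₁ + κ) ⬝ᵥ γ t₁ = (G t₂ + κ) ⬝ᵥ γ t₂ :=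
  gyroscopic_chaplygin_ball_markeev_integral_general ε hε κ ω γ G heqG heqγ
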